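/- For partitions: let d \ge 2 and let \mathcal{P}^\circ_d be the set of partitions \lambda of d with at least two parts and \lambda_1 = \lambda_2 (two equal largest parts). If a differential polynomial \theta = \sum_{\lambda\in\mathcal{P}^\circ_d} c_\lambda u_\lambda with constant coefficients c_\lambda \in \mathbb{Q} lies in the image of \partial_x, then all c_\lambda = 0. -/
import Mathlib


open MvPolynomial

/-- The ring of differential polynomials in one variable: `X i` represents `u_i`. -/
abbrev DiffPoly : Type := MvPolynomial ℕ ℚ

/-- The total `x`-derivative `∂_x = ∑ u_{i+1} ∂/∂u_i`. -/
noncomputable def dx : Module.End ℚ DiffPoly :=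
  (MvPolynomial.mkDerivation ℚ (fun i => (X (i + 1) : DiffPoly))).toLinearMap


lemma dx_monomial (m : ℕ →₀ ℕ) (c : ℚ) :
    dx (monomial m c) =
      c • m.sum fun i e =>
        monomial (m - Finsupp.single i 1 + Finsupp.single (i+1) 1) (e : ℚ) := by
  rw [dx]
  show (MvPolynomial.mkDerivation ℚ (fun i => (X (i + 1) : DiffPoly))) (monomial m c) = _
  rw [mkDerivation_monomial]
  congr 1
  apply Finsupp.sum_congr
  intro i _
  rw [smul_eq_mul, X, monomial_mul, mul_one]


/-- A nonzero constant-coefficient sum of monomials `u_λ` over partitions `λ` of `d`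
with at least two parts, all parts `≥ 1`, and two equal largest parts, is never a
total `x`-derivative: if it is `∂_x`-exact then it vanishes. -/
theorem not_dx_exact_of_special_form (d : ℕ) (hd : 2 ≤ d) (θ : DiffPoly)
    (hform : ∀ m ∈ θ.support,
      m 0 = 0 ∧
      (m.sum fun i e => i * e) = d ∧
      2 ≤ (m.sum fun _ e => e) ∧
      ∃ k ∈ m.support, 2 ≤ m k ∧ ∀ j ∈ m.support, j ≤ k)
    (hexact : ∃ f : DiffPoly, dx f = θ) :
    θ = 0 := by
  obtain ⟨f, hf⟩ := hexact
  by_contra hθ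
  -- the set of nonconstant monomials of f
  set S : Finset (ℕ →₀ ℕ) := f.support.filter (fun m => m ≠ 0) with hS
  have hSne : S.Nonempty := by
    rcases Finset.eq_empty_or_nonempty S with h | h
    · exfalso
      apply hθ
      rw [← hf]
      have hfc : ∀ m ∈ f.support, m = 0 := by
        intro m hm
        by_contra hm0
        have : m ∈ S := Finset.mem_filter.2 ⟨hm, hm0⟩
        simp [h] at this
      have : f = C (coeff 0 f) := by
        ext n
        rcases eq_or_ne n 0 with rfl | hn
        · simp
        · rw [coeff_C, if_neg (Ne.symm hn)]
          by_contra hcn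
          exact hn (hfc n (by simpa [mem_support_iff] using hcn))
      rw [this, dx]
      simp
    · exact h
  -- pick m' in S with maximal top index
  obtain ⟨m', hm'S, hm'max⟩ := S.exists_max_image (fun m => m.support.sup id) hSne
  have hm'f : m' ∈ f.support := (Finset.mem_filter.1 hm'S).1
  have hm'0 : m' ≠ 0 := (Finset.mem_filter.1 hm'S).2
  have hsupne : m'.support.Nonempty := Finsupp.support_nonempty_iff.2 hm'0
  set k : ℕ := m'.support.sup id with hk
  have hkmem : k ∈ m'.support := by
    obtain ⟨a, ha, hae⟩ := Finset.exists_mem_eq_sup m'.support hsupne id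
    rw [hk, hae]; exact ha
  have hkmax : ∀ j ∈ m'.support, j ≤ k := fun j hj => Finset.le_sup (f := id) hj
  have hm'k : 1 ≤ m' k := Nat.one_le_iff_ne_zero.2 (Finsupp.mem_support_iff.1 hkmem)
  -- bound on supports of all monomials in f's support that are nonzero
  have hSbound : ∀ m ∈ S, ∀ j ∈ m.support, j ≤ k := by
    intro m hm j hj
    exact le_trans (Finset.le_sup (f := id) hj) (hm'max m hm)
  set μ : ℕ →₀ ℕ := m' - Finsupp.single k 1 + Finsupp.single (k+1) 1 with hμ
  -- key uniqueness
  have key : ∀ m ∈ f.support, ∀ i ∈ m.support,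
      m - Finsupp.single i 1 + Finsupp.single (i+1) 1 = μ → m = m' ∧ i = k := by
    intro m hmf i hi h
    have hm0 : m ≠ 0 := by
      intro h0; rw [h0] at hi; simp at hi
    have hmb : ∀ j ∈ m.support, j ≤ k := hSbound m (Finset.mem_filter.2 ⟨hmf, hm0⟩)
    have hik : i ≤ k := hmb i hi
    have hmk1 : m (k+1) = 0 := by
      by_contra h'
      exact absurd (hmb (k+1) (Finsupp.mem_support_iff.2 h')) (by omega)
    have hm'k1 : m' (k+1) = 0 := by
      by_contra h'
      exact absurd (hkmax (k+1) (Finsupp.mem_support_iff.2 h')) (by omega)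
    have hik2 : i = k := by
      have := DFunLike.congr_fun h (k+1)
      simp only [hμ, Finsupp.add_apply, Finsupp.tsub_apply, Finsupp.single_apply] at this
      rw [hmk1, hm'k1] at this
      split_ifs at this <;> omega
    subst hik2
    refine ⟨?_, rfl⟩
    have hmi : 1 ≤ m k := Nat.one_le_iff_ne_zero.2 (Finsupp.mem_support_iff.1 hi)
    ext j
    have h2 := DFunLike.congr_fun h j
    simp only [hμ, Finsupp.add_apply, Finsupp.tsub_apply, Finsupp.single_apply] at h2
    split_ifs at h2 <;> first | omega | (subst_vars; omega)
  -- compute the coefficient of μ in θ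
  have hcoeff : coeff μ θ = (m' k : ℚ) * coeff m' f := by
    rw [← hf]
    conv_lhs => rw [f.as_sum, map_sum]
    rw [coeff_sum]
    have hterm : ∀ m ∈ f.support,
        coeff μ (dx (monomial m (coeff m f))) =
          if m = m' then (m' k : ℚ) * coeff m' f else 0 := by
      intro m hmf
      rw [dx_monomial, coeff_smul, Finsupp.sum, coeff_sum]
      have : ∀ i ∈ m.support,
          coeff μ (monomial (m - Finsupp.single i 1 + Finsupp.single (i+1) 1) ((m i : ℚ))) =
            if m = m' ∧ i = k then (m i : ℚ) else 0 := by
        intro i hi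
        rw [coeff_monomial]
        by_cases h : m - Finsupp.single i 1 + Finsupp.single (i+1) 1 = μ
        · rw [if_pos h, if_pos (key m hmf i hi h)]
        · rw [if_neg h, if_neg]
          rintro ⟨rfl, rfl⟩
          exact h rfl
      rw [Finset.sum_congr rfl this]
      by_cases hm : m = m'
      · subst hm
        simp only [true_and]
        rw [Finset.sum_ite_eq' m.support k (fun x => (m x : ℚ)), if_pos hkmem,
          smul_eq_mul, mul_comm]
        simp
      · rw [Finset.sum_eq_zero, smul_zero, if_neg hm]
        intro i hi
        rw [if_neg]
        rintro ⟨h1, _⟩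
        exact hm h1
    rw [Finset.sum_congr rfl hterm,
      Finset.sum_ite_eq' f.support m' (fun _ => (m' k : ℚ) * coeff m' f), if_pos hm'f]
  have hcne : coeff μ θ ≠ 0 := by
    rw [hcoeff]
    have h1 : (m' k : ℚ) ≠ 0 := by exact_mod_cast Nat.one_le_iff_ne_zero.1 hm'k
    exact mul_ne_zero h1 (mem_support_iff.1 hm'f)
  -- contradiction with hform
  have hμmem : μ ∈ θ.support := mem_support_iff.2 hcne
  obtain ⟨-, -, -, k', hk's, hk'2, hk'max⟩ := hform μ hμmem
  have hμk1 : μ (k+1) = 1 := by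
    have hm'k1 : m' (k+1) = 0 := by
      by_contra h'
      exact absurd (hkmax (k+1) (Finsupp.mem_support_iff.2 h')) (by omega)
    simp [hμ, Finsupp.add_apply, Finsupp.tsub_apply, Finsupp.single_apply, hm'k1]
  have hk1mem : (k+1) ∈ μ.support := Finsupp.mem_support_iff.2 (by omega)
  have h1 : k + 1 ≤ k' := hk'max (k+1) hk1mem
  have hμk' : μ k' ≤ 1 := by
    rcases eq_or_lt_of_le h1 with rfl | h2
    · omega
    · have hm'k' : m' k' = 0 := by
        by_contra h'
        exact absurd (hkmax k' (Finsupp.mem_support_iff.2 h')) (by omega)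
      simp only [hμ, Finsupp.add_apply, Finsupp.tsub_apply, Finsupp.single_apply, hm'k']
      split_ifs <;> omega
  omega
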